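/- arXiv:2405.14915 — 3 statements merged into one kernel-verified Lean document; each statement's English description precedes it below -/
import Mathlib

section
/- A θ-invariant triangulation of the regular (2n+2)-gon contains exactly one diameter. -/
/-- The 180° rotation on the vertices `ZMod (2n+2)` of the regular `(2n+2)`-gon. -/
def theta (n : ℕ) (a : ZMod (2 * n + 2)) : ZMod (2 * n + 2) :=
  a + ((n + 1 : ℕ) : ZMod (2 * n + 2))

/-- A diagonal of the `m`-gon: an unordered pair of distinct, non-adjacent vertices. -/
def IsDiagonal (m : ℕ) (p : Sym2 (ZMod m)) : Prop :=
  ∃ a b : ZMod m, p = s(a, b) ∧ a ≠ b ∧ b ≠ a + 1 ∧ a ≠ b + 1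

/-- `x` lies strictly between `a` and `b` in cyclic (counterclockwise) order. -/
def StrictBtw (m : ℕ) (a x b : ZMod m) : Prop :=
  0 < (x - a).val ∧ (x - a).val < (b - a).val

/-- Two chords of the `m`-gon cross: their endpoint pairs strictly separate each other
in cyclic order. -/
def Cross (m : ℕ) (p q : Sym2 (ZMod m)) : Prop :=
  ∃ x y z w : ZMod m, p = s(x, y) ∧ q = s(z, w) ∧ StrictBtw m x z y ∧ StrictBtw m y w x

/-- A diameter of the `(2n+2)`-gon: a diagonal of the form `{a, a + n + 1}`. -/
def IsDiameter (n : ℕ) (p : Sym2 (ZMod (2 * n + 2))) : Prop :=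
  ∃ a : ZMod (2 * n + 2), p = s(a, a + ((n + 1 : ℕ) : ZMod (2 * n + 2)))

/-- A finset closed under a fixed-point-free involution has even cardinality. -/
lemma even_card_of_invol {α : Type*} [DecidableEq α] (f : α → α) (hf : ∀ a, f (f a) = a) :
    ∀ S : Finset α, (∀ p ∈ S, f p ∈ S) → (∀ p ∈ S, f p ≠ p) → Even S.card := by
  intro S
  induction S using Finset.strongInduction with
  | _ S ih =>
    intro hcl hnf
    rcases S.eq_empty_or_nonempty with rfl | ⟨p, hp⟩
    · simp
    · have hfp : f p ∈ S := hcl p hp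
      have hne : f p ≠ p := hnf p hp
      have hmem : f p ∈ S.erase p := Finset.mem_erase.mpr ⟨hne, hfp⟩
      set S' := (S.erase p).erase (f p) with hS'
      have hsub : S' ⊂ S := by
        refine Finset.ssubset_of_subset_of_ssubset ?_ (Finset.erase_ssubset hp)
        exact Finset.erase_subset _ _
      have hcard : S.card = S'.card + 2 := by
        have h1 : (S.erase p).card = S.card - 1 := Finset.card_erase_of_mem hp
        have h2 : S'.card = (S.erase p).card - 1 := Finset.card_erase_of_mem hmem
        have h3 : 0 < S.card := Finset.card_pos.mpr ⟨p, hp⟩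
        have h4 : 0 < (S.erase p).card := Finset.card_pos.mpr ⟨f p, hmem⟩
        omega
      have hcl' : ∀ q ∈ S', f q ∈ S' := by
        intro q hq
        rw [hS', Finset.mem_erase, Finset.mem_erase] at hq ⊢
        obtain ⟨hq1, hq2, hq3⟩ := hq
        refine ⟨?_, ?_, hcl q hq3⟩
        · intro h
          apply hq2
          have h2 := congrArg f h
          rwa [hf, hf] at h2
        · intro h
          apply hq1
          have h2 := congrArg f h
          rwa [hf] at h2
      have hnf' : ∀ q ∈ S', f q ≠ q := fun q hq =>
        hnf q (Finset.mem_of_mem_erase (Finset.mem_of_mem_erase hq))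
      obtain ⟨k, hk⟩ := ih S' hsub hcl' hnf'
      exact ⟨k + 1, by omega⟩

/-- A `θ`-invariant triangulation of the `(2n+2)`-gon contains exactly one diameter. -/
theorem stmt6 (n : ℕ) (hn : 1 ≤ n) (T : Finset (Sym2 (ZMod (2 * n + 2))))
    (hdiag : ∀ p ∈ T, IsDiagonal (2 * n + 2) p)
    (hnc : ∀ p ∈ T, ∀ q ∈ T, p ≠ q → ¬ Cross (2 * n + 2) p q)
    (hcard : T.card = 2 * n - 1)
    (hinv : T.image (Sym2.map (theta n)) = T) :
    ∃! p, p ∈ T ∧ IsDiameter n p := by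
  haveI : NeZero (2 * n + 2) := ⟨by omega⟩
  set c : ZMod (2 * n + 2) := ((n + 1 : ℕ) : ZMod (2 * n + 2)) with hcdef
  have hvalc : c.val = n + 1 := by
    rw [hcdef, ZMod.val_natCast, Nat.mod_eq_of_lt (by omega)]
  have hc0 : c ≠ 0 := by
    intro h
    have := hvalc
    rw [h, ZMod.val_zero] at this
    omega
  have hcc : c + c = 0 := by
    rw [hcdef, ← Nat.cast_add]
    have : (n + 1) + (n + 1) = 2 * n + 2 := by omega
    rw [this, ZMod.natCast_self]
  have hnegc : -c = c := by
    rw [neg_eq_iff_add_eq_zero, hcc]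
  have hvalnegc : (-c).val = n + 1 := by rw [hnegc, hvalc]
  set f : Sym2 (ZMod (2 * n + 2)) → Sym2 (ZMod (2 * n + 2)) := Sym2.map (theta n) with hfdef
  have hff : ∀ p, f (f p) = p := by
    intro p
    induction p using Sym2.ind with
    | _ a b =>
      simp only [hfdef, Sym2.map_pair_eq, theta]
      rw [add_assoc, add_assoc, hcc, add_zero, add_zero]
  have hclT : ∀ p ∈ T, f p ∈ T := by
    intro p hp
    rw [← hinv]
    exact Finset.mem_image_of_mem _ hp
  -- a fixed point of f is a diameter
  have hfix_diam : ∀ p : Sym2 (ZMod (2 * n + 2)), f p = p → IsDiameter n p := by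
    intro p hp
    induction p using Sym2.ind with
    | _ a b =>
      rw [hfdef, Sym2.map_pair_eq, theta, theta, Sym2.eq_iff] at hp
      rcases hp with ⟨h1, _⟩ | ⟨h1, h2⟩
      · exact absurd (by linear_combination h1 : c = 0) hc0
      · exact ⟨a, by rw [← h1]⟩
  -- existence
  have hodd : ¬ Even T.card := by rw [hcard]; rintro ⟨k, hk⟩; omega
  have hex : ∃ p ∈ T, f p = p := by
    by_contra h
    push_neg at h
    exact hodd (even_card_of_invol f hff T hclT h)
  obtain ⟨p₀, hp₀T, hp₀fix⟩ := hex
  refine ⟨p₀, ⟨hp₀T, hfix_diam p₀ hp₀fix⟩, ?_⟩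
  -- uniqueness: any two diameters in T coincide (else they cross)
  have key : ∀ p ∈ T, ∀ q ∈ T, IsDiameter n p → IsDiameter n q → p = q := by
    intro p hp q hq ⟨a, ha⟩ ⟨b, hb⟩
    by_contra hpq
    set d := (b - a).val with hd
    have hba : b - a ≠ 0 := by
      intro h
      apply hpq
      have : b = a := by linear_combination h
      rw [ha, hb, this]
    have hd0 : 0 < d := by
      rw [hd, Nat.pos_iff_ne_zero]
      intro h
      exact hba (ZMod.val_eq_zero _ |>.mp h)
    have hdlt : d < 2 * n + 2 := ZMod.val_lt _
    have hdne : d ≠ n + 1 := by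
      intro h
      apply hpq
      have hbac : b - a = c := by
        apply ZMod.val_injective
        rw [← hd] at *
        rw [h, hvalc]
      have hbval : b = a + c := by linear_combination hbac
      rw [ha, hb, hbval, add_assoc, hcc, add_zero, Sym2.eq_swap]
    have hsub1 : ∀ x y : ZMod (2 * n + 2), x + c - x = c := fun x y => by ring
    rcases lt_or_gt_of_ne hdne with hlt | hgt
    · -- d < n+1 : p and q cross
      apply hnc p hp q hq hpq
      refine ⟨a, a + c, b, b + c, ha, hb, ⟨hd0, ?_⟩, ⟨?_, ?_⟩⟩
      · rw [show a + c - a = c by ring, hvalc]; exact hlt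
      · rw [show b + c - (a + c) = b - a by ring]; exact hd0
      · rw [show b + c - (a + c) = b - a by ring, show a - (a + c) = -c by ring, hvalnegc]
        exact hlt
    · -- d > n+1 : q and p cross (other orientation)
      apply hnc q hq p hp (Ne.symm hpq)
      have hab : (a - b).val = 2 * n + 2 - d := by
        rw [show a - b = -(b - a) by ring, ZMod.neg_val, if_neg hba]
      refine ⟨b, b + c, a, a + c, hb, ha, ⟨?_, ?_⟩, ⟨?_, ?_⟩⟩
      · rw [hab]; omega
      · rw [hab, show b + c - b = c by ring, hvalc]; omega
      · rw [show a + c - (b + c) = a - b by ring, hab]; omega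
      · rw [show a + c - (b + c) = a - b by ring, hab,
          show b - (b + c) = -c by ring, hvalnegc]; omega
  intro q ⟨hqT, hqD⟩
  exact key q hqT p₀ hp₀T hqD (hfix_diam p₀ hp₀fix)
end

section
/- In a snake graph (a sequence of unit square tiles G_1,...,G_d glued so that consecutive tiles share exactly one edge, each tile sharing edges only with its neighbors), there are exactly two perfect matchings consisting only of boundary edges. -/
/-- The edges of the ladder graph (straight snake graph) with `d` square tiles, on the
vertex set `{0,…,d} × Bool`: horizontal edges `(i,b)-(i+1,b)` and vertical edges
`(i,false)-(i,true)`. -/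
def LadderEdges (d : ℕ) : Set (Sym2 (ℕ × Bool)) :=
  {e | (∃ i < d, ∃ b : Bool, e = s(((i : ℕ), b), (i + 1, b))) ∨
       (∃ i ≤ d, e = s(((i : ℕ), false), (i, true)))}

/-- A perfect matching of the ladder graph with `d` squares: a set of ladder edges covering
every vertex `(i, b)`, `i ≤ d`, exactly once. -/
def IsLadderPM (d : ℕ) (P : Set (Sym2 (ℕ × Bool))) : Prop :=
  P ⊆ LadderEdges d ∧ ∀ v : ℕ × Bool, v.1 ≤ d → ∃! e, e ∈ P ∧ v ∈ e

/-- The boundary edges of the ladder with `d` squares: those lying on exactly one tile,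
namely all horizontal edges together with the two extreme vertical edges. -/
def LadderBoundary (d : ℕ) : Set (Sym2 (ℕ × Bool)) :=
  {e | (∃ i < d, ∃ b : Bool, e = s(((i : ℕ), b), (i + 1, b))) ∨
       e = s(((0 : ℕ), false), (0, true)) ∨ e = s((d, false), (d, true))}

def hE (i : ℕ) (b : Bool) : Sym2 (ℕ × Bool) := s(((i : ℕ), b), (i + 1, b))
def vE (i : ℕ) : Sym2 (ℕ × Bool) := s(((i : ℕ), false), (i, true))

lemma hE_eq_hE {i j : ℕ} {b c : Bool} : hE i b = hE j c ↔ i = j ∧ b = c := by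
  constructor
  · intro h
    simp only [hE, Sym2.eq_iff, Prod.mk.injEq] at h
    rcases h with ⟨⟨h1,h2⟩,h3,h4⟩|⟨⟨h1,h2⟩,h3,h4⟩
    · exact ⟨h1, h2⟩
    · omega
  · rintro ⟨rfl, rfl⟩; rfl

lemma vE_eq_vE {i j : ℕ} : vE i = vE j ↔ i = j := by
  constructor
  · intro h
    simp only [vE, Sym2.eq_iff, Prod.mk.injEq] at h
    tauto
  · rintro rfl; rfl

lemma hE_ne_vE {i j : ℕ} {b : Bool} : hE i b ≠ vE j := by
  intro h
  simp only [hE, vE, Sym2.eq_iff, Prod.mk.injEq] at h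
  rcases h with ⟨⟨h1,h2⟩,h3,h4⟩|⟨⟨h1,h2⟩,h3,h4⟩ <;> simp_all

lemma mem_hE {p : ℕ × Bool} {i : ℕ} {b : Bool} : p ∈ hE i b ↔ p = (i, b) ∨ p = (i+1, b) := by
  simp [hE]

lemma mem_vE {p : ℕ × Bool} {i : ℕ} : p ∈ vE i ↔ p = (i, false) ∨ p = (i, true) := by
  simp [vE]

lemma boundary_def {d : ℕ} {e : Sym2 (ℕ × Bool)} :
    e ∈ LadderBoundary d ↔ (∃ i < d, ∃ b : Bool, e = hE i b) ∨ e = vE 0 ∨ e = vE d :=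
  Iff.rfl

/-- The boundary edges containing a given vertex. -/
lemma boundary_cases {d i : ℕ} {b : Bool} {e : Sym2 (ℕ × Bool)}
    (he : e ∈ LadderBoundary d) (hv : ((i, b) : ℕ × Bool) ∈ e) :
    (∃ j < d, (j = i ∨ j + 1 = i) ∧ e = hE j b) ∨ (i = 0 ∧ e = vE 0) ∨ (i = d ∧ e = vE d) := by
  rcases he with ⟨j, hj, c, rfl⟩ | rfl | rfl
  · rcases mem_hE.mp hv with h | h <;>
    · rw [Prod.mk.injEq] at h
      obtain ⟨h1, h2⟩ := h
      subst h2
      exact .inl ⟨j, hj, by omega, rfl⟩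
  · rcases mem_vE.mp hv with h | h <;> rw [Prod.mk.injEq] at h <;> exact .inr (.inl ⟨h.1, rfl⟩)
  · rcases mem_vE.mp hv with h | h <;> rw [Prod.mk.injEq] at h <;> exact .inr (.inr ⟨h.1, rfl⟩)

def MA (d : ℕ) : Set (Sym2 (ℕ × Bool)) :=
  {e | (∃ i < d, i % 2 = 0 ∧ ∃ b : Bool, e = hE i b) ∨ (d % 2 = 0 ∧ e = vE d)}

def MB (d : ℕ) : Set (Sym2 (ℕ × Bool)) :=
  {e | (∃ i < d, i % 2 = 1 ∧ ∃ b : Bool, e = hE i b) ∨ e = vE 0 ∨ (d % 2 = 1 ∧ e = vE d)}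

section forced
variable {d : ℕ} {P : Set (Sym2 (ℕ × Bool))}

/-- membership of horizontal edges in a boundary PM is forced by whether `vE 0 ∈ P`. -/
lemma forced (hd : 1 ≤ d) (hpm : IsLadderPM d P) (hb : P ⊆ LadderBoundary d) :
    ∀ i, i < d → ∀ b, (hE i b ∈ P ↔ (i % 2 = 0 ↔ vE 0 ∉ P)) := by
  obtain ⟨hsub, hcov⟩ := hpm
  intro i
  induction i with
  | zero =>
    intro _ b
    obtain ⟨e, ⟨heP, hve⟩, huniq⟩ := hcov (0, b) (by simp)
    constructor
    · intro hP
      refine ⟨fun _ hv0 => ?_, fun _ => rfl⟩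
      have e1 := huniq _ ⟨hP, mem_hE.mpr (.inl rfl)⟩
      have e2 := huniq _ ⟨hv0, by rcases b <;> simp [mem_vE]⟩
      exact hE_ne_vE (e1.trans e2.symm)
    · intro h
      have hv0 : vE 0 ∉ P := h.mp rfl
      rcases boundary_cases (hb heP) hve with ⟨j, hj, hji, he⟩ | ⟨_, he⟩ | ⟨h0, he⟩
      · have : j = 0 := by omega
        subst this
        exact he ▸ heP
      · exact absurd (he ▸ heP) hv0
      · omega
  | succ i ih =>
    intro hi b
    have hih := ih (by omega) b
    obtain ⟨e, ⟨heP, hve⟩, huniq⟩ := hcov (i + 1, b) (by simp; omega)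
    have key : hE (i+1) b ∈ P ↔ hE i b ∉ P := by
      constructor
      · intro h1 h2
        have e1 := huniq _ ⟨h1, mem_hE.mpr (.inl rfl)⟩
        have e2 := huniq _ ⟨h2, mem_hE.mpr (.inr rfl)⟩
        have := hE_eq_hE.mp (e1.trans e2.symm)
        omega
      · intro h2
        rcases boundary_cases (hb heP) hve with ⟨j, hj, hji, he⟩ | ⟨h0, _⟩ | ⟨h0, _⟩
        · rcases hji with rfl | hji
          · exact he ▸ heP
          · have : j = i := by omega
            subst this
            exact absurd (he ▸ heP) h2
        · omega
        · omega
    rw [key, hih]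
    by_cases hv : vE 0 ∈ P <;> simp [hv] <;> omega

lemma forced_end (hd : 1 ≤ d) (hpm : IsLadderPM d P) (hb : P ⊆ LadderBoundary d) :
    vE d ∈ P ↔ (d % 2 = 0 ↔ vE 0 ∉ P) := by
  obtain ⟨hsub, hcov⟩ := hpm
  obtain ⟨e, ⟨heP, hve⟩, huniq⟩ := hcov (d, false) (by simp)
  have hf := forced hd ⟨hsub, hcov⟩ hb (d-1) (by omega) false
  have hmem : ((d, false) : ℕ × Bool) ∈ hE (d-1) false := by
    rw [mem_hE]; right; rw [Prod.mk.injEq]; exact ⟨by omega, rfl⟩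
  have key : vE d ∈ P ↔ hE (d-1) false ∉ P := by
    constructor
    · intro h1 h2
      have e1 := huniq _ ⟨h1, mem_vE.mpr (.inl rfl)⟩
      have e2 := huniq _ ⟨h2, hmem⟩
      exact hE_ne_vE (e2.trans e1.symm)
    · intro h2
      rcases boundary_cases (hb heP) hve with ⟨j, hj, hji, he⟩ | ⟨h0, _⟩ | ⟨h0, he⟩
      · have : j = d - 1 := by omega
        subst this
        exact absurd (he ▸ heP) h2
      · omega
      · exact he ▸ heP
  rw [key, hf]
  by_cases hv : vE 0 ∈ P <;> simp [hv] <;> omega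

/-- classification: a boundary PM equals MA or MB. -/
lemma classify (hd : 1 ≤ d) (hpm : IsLadderPM d P) (hb : P ⊆ LadderBoundary d) :
    P = MA d ∨ P = MB d := by
  by_cases hv : vE 0 ∈ P
  · right
    ext e
    constructor
    · intro heP
      rcases hb heP with ⟨j, hj, c, rfl⟩ | rfl | rfl
      · have := (forced hd hpm hb j hj c).mp heP
        simp [hv] at this
        exact .inl ⟨j, hj, by omega, c, rfl⟩
      · exact .inr (.inl rfl)
      · have := (forced_end hd hpm hb).mp heP
        simp [hv] at this
        exact .inr (.inr ⟨by omega, rfl⟩)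
    · rintro (⟨j, hj, hjo, c, rfl⟩ | rfl | ⟨hdo, rfl⟩)
      · exact (forced hd hpm hb j hj c).mpr (by simp [hv]; omega)
      · exact hv
      · exact (forced_end hd hpm hb).mpr (by simp [hv]; omega)
  · left
    ext e
    constructor
    · intro heP
      rcases hb heP with ⟨j, hj, c, rfl⟩ | rfl | rfl
      · have := (forced hd hpm hb j hj c).mp heP
        simp [hv] at this
        exact .inl ⟨j, hj, this, c, rfl⟩
      · exact absurd heP hv
      · have := (forced_end hd hpm hb).mp heP
        simp [hv] at this
        exact .inr ⟨this, rfl⟩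
    · rintro (⟨j, hj, hjo, c, rfl⟩ | ⟨hdo, rfl⟩)
      · exact (forced hd hpm hb j hj c).mpr (by simp [hv, hjo])
      · exact (forced_end hd hpm hb).mpr (by simp [hv, hdo])

end forced

section existence
variable {d : ℕ}

lemma boundary_sub_edges : LadderBoundary d ⊆ LadderEdges d := by
  rintro e (⟨i, hi, b, rfl⟩ | rfl | rfl)
  · exact .inl ⟨i, hi, b, rfl⟩
  · exact .inr ⟨0, Nat.zero_le d, rfl⟩
  · exact .inr ⟨d, le_refl d, rfl⟩

lemma MA_sub_boundary : MA d ⊆ LadderBoundary d := by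
  rintro e (⟨i, hi, _, b, rfl⟩ | ⟨_, rfl⟩)
  · exact .inl ⟨i, hi, b, rfl⟩
  · exact .inr (.inr rfl)

lemma MB_sub_boundary : MB d ⊆ LadderBoundary d := by
  rintro e (⟨i, hi, _, b, rfl⟩ | rfl | ⟨_, rfl⟩)
  · exact .inl ⟨i, hi, b, rfl⟩
  · exact .inr (.inl rfl)
  · exact .inr (.inr rfl)

lemma MA_cases {e : Sym2 (ℕ × Bool)} (he : e ∈ MA d) {i : ℕ} {b : Bool}
    (hv : ((i, b) : ℕ × Bool) ∈ e) :
    (i % 2 = 0 ∧ i < d ∧ e = hE i b) ∨ (i % 2 = 1 ∧ 1 ≤ i ∧ i ≤ d ∧ e = hE (i-1) b) ∨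
      (i = d ∧ d % 2 = 0 ∧ e = vE d) := by
  rcases he with ⟨j, hj, hjp, c, rfl⟩ | ⟨hdp, rfl⟩
  · rcases mem_hE.mp hv with h | h <;> rw [Prod.mk.injEq] at h <;> obtain ⟨h1, h2⟩ := h
    · exact .inl ⟨by omega, by omega, hE_eq_hE.mpr ⟨h1.symm, h2.symm⟩⟩
    · exact .inr (.inl ⟨by omega, by omega, by omega,
        hE_eq_hE.mpr ⟨by omega, h2.symm⟩⟩)
  · rcases mem_vE.mp hv with h | h <;> rw [Prod.mk.injEq] at h <;>
      exact .inr (.inr ⟨h.1, hdp, rfl⟩)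

lemma MB_cases {e : Sym2 (ℕ × Bool)} (he : e ∈ MB d) {i : ℕ} {b : Bool}
    (hv : ((i, b) : ℕ × Bool) ∈ e) :
    (i % 2 = 1 ∧ i < d ∧ e = hE i b) ∨ (i % 2 = 0 ∧ 2 ≤ i ∧ i ≤ d ∧ e = hE (i-1) b) ∨
      (i = 0 ∧ e = vE 0) ∨ (i = d ∧ d % 2 = 1 ∧ e = vE d) := by
  rcases he with ⟨j, hj, hjp, c, rfl⟩ | rfl | ⟨hdp, rfl⟩
  · rcases mem_hE.mp hv with h | h <;> rw [Prod.mk.injEq] at h <;> obtain ⟨h1, h2⟩ := h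
    · exact .inl ⟨by omega, by omega, hE_eq_hE.mpr ⟨h1.symm, h2.symm⟩⟩
    · exact .inr (.inl ⟨by omega, by omega, by omega,
        hE_eq_hE.mpr ⟨by omega, h2.symm⟩⟩)
  · rcases mem_vE.mp hv with h | h <;> rw [Prod.mk.injEq] at h <;>
      exact .inr (.inr (.inl ⟨h.1, rfl⟩))
  · rcases mem_vE.mp hv with h | h <;> rw [Prod.mk.injEq] at h <;>
      exact .inr (.inr (.inr ⟨h.1, hdp, rfl⟩))

lemma mem_hE_right {i : ℕ} {b : Bool} (hi : 1 ≤ i) : ((i, b) : ℕ × Bool) ∈ hE (i-1) b := by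
  rw [mem_hE]; right; rw [Prod.mk.injEq]; exact ⟨by omega, rfl⟩

lemma MA_pm (hd : 1 ≤ d) : IsLadderPM d (MA d) := by
  refine ⟨fun e he => boundary_sub_edges (MA_sub_boundary he), ?_⟩
  rintro ⟨i, b⟩ hi
  simp only at hi
  by_cases hp : i % 2 = 0
  · by_cases hid : i < d
    · refine ⟨hE i b, ⟨.inl ⟨i, hid, hp, b, rfl⟩, mem_hE.mpr (.inl rfl)⟩, ?_⟩
      rintro y ⟨hy, hvy⟩
      rcases MA_cases hy hvy with ⟨_, _, rfl⟩ | ⟨h1, _⟩ | ⟨h1, _⟩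
      · rfl
      · omega
      · omega
    · have hid' : i = d := by omega
      refine ⟨vE d, ⟨.inr ⟨by omega, rfl⟩, by rw [hid']; rcases b <;> simp [mem_vE]⟩, ?_⟩
      rintro y ⟨hy, hvy⟩
      rcases MA_cases hy hvy with ⟨_, h2, _⟩ | ⟨h1, _⟩ | ⟨_, _, rfl⟩
      · omega
      · omega
      · rfl
  · refine ⟨hE (i-1) b, ⟨.inl ⟨i-1, by omega, by omega, b, rfl⟩, mem_hE_right (by omega)⟩, ?_⟩
    rintro y ⟨hy, hvy⟩
    rcases MA_cases hy hvy with ⟨h1, _⟩ | ⟨_, _, _, rfl⟩ | ⟨h1, h2, _⟩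
    · omega
    · rfl
    · omega

lemma MB_pm (hd : 1 ≤ d) : IsLadderPM d (MB d) := by
  refine ⟨fun e he => boundary_sub_edges (MB_sub_boundary he), ?_⟩
  rintro ⟨i, b⟩ hi
  simp only at hi
  by_cases h0 : i = 0
  · subst h0
    refine ⟨vE 0, ⟨.inr (.inl rfl), by rcases b <;> simp [mem_vE]⟩, ?_⟩
    rintro y ⟨hy, hvy⟩
    rcases MB_cases hy hvy with ⟨h1, _⟩ | ⟨_, h2, _⟩ | ⟨_, rfl⟩ | ⟨h1, h2, _⟩
    · omega
    · omega
    · rfl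
    · omega
  by_cases hp : i % 2 = 1
  · by_cases hid : i < d
    · refine ⟨hE i b, ⟨.inl ⟨i, hid, hp, b, rfl⟩, mem_hE.mpr (.inl rfl)⟩, ?_⟩
      rintro y ⟨hy, hvy⟩
      rcases MB_cases hy hvy with ⟨_, _, rfl⟩ | ⟨h1, _⟩ | ⟨h1, _⟩ | ⟨h1, _⟩
      · rfl
      · omega
      · omega
      · omega
    · have hid' : i = d := by omega
      refine ⟨vE d, ⟨.inr (.inr ⟨by omega, rfl⟩), by rw [hid']; rcases b <;> simp [mem_vE]⟩, ?_⟩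
      rintro y ⟨hy, hvy⟩
      rcases MB_cases hy hvy with ⟨_, h2, _⟩ | ⟨h1, _⟩ | ⟨h1, _⟩ | ⟨_, _, rfl⟩
      · omega
      · omega
      · omega
      · rfl
  · refine ⟨hE (i-1) b, ⟨.inl ⟨i-1, by omega, by omega, b, rfl⟩, mem_hE_right (by omega)⟩, ?_⟩
    rintro y ⟨hy, hvy⟩
    rcases MB_cases hy hvy with ⟨h1, _⟩ | ⟨_, _, _, rfl⟩ | ⟨h1, _⟩ | ⟨h1, h2, _⟩
    · omega
    · rfl
    · omega
    · omega

lemma MA_ne_MB (hd : 1 ≤ d) : MA d ≠ MB d := by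
  intro h
  have : vE 0 ∈ MA d := h ▸ (.inr (.inl rfl))
  rcases this with ⟨j, hj, hjp, c, he⟩ | ⟨hdp, he⟩
  · exact hE_ne_vE he.symm
  · have := vE_eq_vE.mp he
    omega

end existence


/-- A snake graph (modelled by the ladder with `d ≥ 1` tiles) has exactly two perfect
matchings consisting only of boundary edges. -/
theorem stmt12 (d : ℕ) (hd : 1 ≤ d) :
    {P : Set (Sym2 (ℕ × Bool)) | IsLadderPM d P ∧ P ⊆ LadderBoundary d}.ncard = 2 := by
  have hset : {P : Set (Sym2 (ℕ × Bool)) | IsLadderPM d P ∧ P ⊆ LadderBoundary d}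
      = {MA d, MB d} := by
    ext P
    simp only [Set.mem_setOf_eq, Set.mem_insert_iff, Set.mem_singleton_iff]
    constructor
    · rintro ⟨hpm, hb⟩
      exact classify hd hpm hb
    · rintro (rfl | rfl)
      · exact ⟨MA_pm hd, MA_sub_boundary⟩
      · exact ⟨MB_pm hd, MB_sub_boundary⟩
  rw [hset]
  exact Set.ncard_pair (MA_ne_MB hd)
end

section
/- Let T be a θ-invariant triangulation of the (2n+2)-gon with unique diameter d = {v, v+n+1}. The restriction map, which identifies all vertices strictly on one side of d to a single vertex ∗, sends the diagonals of T (other than the identified boundary) to a triangulation of an (n+3)-gon; in particular, the n θ-orbits of diagonals of T map to n pairwise non-crossing diagonals of the (n+3)-gon. -/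
/-- The restriction map associated to the oriented diameter `{v, v+n+1}`: the vertices
`v, v+1, …, v+n+1` are sent to `0, 1, …, n+1` of the `(n+3)`-gon, and all vertices strictly
on the right of the diameter are identified to the single vertex `∗ = n+2`. -/
def res (n : ℕ) (v a : ZMod (2 * n + 2)) : ZMod (n + 3) :=
  if (a - v).val ≤ n + 1 then (((a - v).val : ℕ) : ZMod (n + 3))
  else ((n + 2 : ℕ) : ZMod (n + 3))

section Positions

variable {m : ℕ} [NeZero m]

theorem ZMod.val_sub_eq_ite (a b : ZMod m) :
    (b - a).val = if a.val ≤ b.val then b.val - a.val else m + b.val - a.val := by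
  have ha := a.val_lt
  have hb := b.val_lt
  have hba := (b - a).val_lt
  rcases lt_or_ge ((b - a).val + a.val) m with h | h
  · have hsum := ZMod.val_add_of_lt h
    rw [sub_add_cancel] at hsum
    split_ifs <;> omega
  · have hsum := ZMod.val_add_of_le h
    rw [sub_add_cancel] at hsum
    split_ifs <;> omega

theorem eq_iff_val_sub_eq (v a b : ZMod m) : a = b ↔ (a - v).val = (b - v).val := by
  rw [(ZMod.val_injective m).eq_iff, sub_left_inj]

theorem strictBtw_iff (v a x b : ZMod m) :
    StrictBtw m a x b ↔
      (a - v).val < (x - v).val ∧ (x - v).val < (b - v).val ∨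
      (x - v).val < (b - v).val ∧ (b - v).val < (a - v).val ∨
      (b - v).val < (a - v).val ∧ (a - v).val < (x - v).val := by
  unfold StrictBtw
  rw [← sub_sub_sub_cancel_right x a v, ← sub_sub_sub_cancel_right b a v,
    ZMod.val_sub_eq_ite (a - v), ZMod.val_sub_eq_ite (a - v)]
  have := (a - v).val_lt
  have := (x - v).val_lt
  have := (b - v).val_lt
  split_ifs <;> omega

theorem eq_add_one_iff (hm : m ≠ 1) (v a b : ZMod m) :
    b = a + 1 ↔
      (b - v).val = (a - v).val + 1 ∨ (a - v).val + 1 = m ∧ (b - v).val = 0 := by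
  rw [← sub_eq_iff_eq_add', ← (ZMod.val_injective m).eq_iff, ZMod.val_one'' hm,
    ← sub_sub_sub_cancel_right b a v, ZMod.val_sub_eq_ite]
  have := (a - v).val_lt
  have := (b - v).val_lt
  split_ifs <;> omega

theorem isDiagonal_mk_iff (hm : m ≠ 1) (v a b : ZMod m) :
    IsDiagonal m s(a, b) ↔ (a - v).val ≠ (b - v).val ∧
      ¬((b - v).val = (a - v).val + 1 ∨ (a - v).val + 1 = m ∧ (b - v).val = 0) ∧
      ¬((a - v).val = (b - v).val + 1 ∨ (b - v).val + 1 = m ∧ (a - v).val = 0) := by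
  rw [ne_eq, ← eq_iff_val_sub_eq v, ← eq_add_one_iff hm, ← eq_add_one_iff hm]
  constructor
  · rintro ⟨a', b', hab, h⟩
    rcases Sym2.eq_iff.mp hab with ⟨rfl, rfl⟩ | ⟨rfl, rfl⟩
    · exact h
    · exact ⟨h.1.symm, h.2.2, h.2.1⟩
  · exact fun h => ⟨a, b, rfl, h⟩

end Positions

theorem Sym2.exists_eq_mk_of_map_eq_mk {α β : Type*} {f : α → β} {p : Sym2 α} {x y : β}
    (h : p.map f = s(x, y)) : ∃ a b, p = s(a, b) ∧ f a = x ∧ f b = y := by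
  induction p using Sym2.ind with | _ a b => ?_
  rcases Sym2.eq_iff.mp h with ⟨hx, hy⟩ | ⟨hx, hy⟩
  · exact ⟨a, b, rfl, hx, hy⟩
  · exact ⟨b, a, Sym2.eq_swap, hy, hx⟩

theorem Cross.of_map {m N : ℕ} {f : ZMod m → ZMod N} (P : ZMod m → Prop)
    (hf : ∀ a x b, P a → P x → P b → StrictBtw N (f a) (f x) (f b) → StrictBtw m a x b)
    {p q : Sym2 (ZMod m)} (hp : ∀ a ∈ p, P a) (hq : ∀ a ∈ q, P a)
    (h : Cross N (p.map f) (q.map f)) : Cross m p q := by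
  obtain ⟨x, y, z, w, hxy, hzw, hxzy, hywx⟩ := h
  obtain ⟨a, b, rfl, rfl, rfl⟩ := Sym2.exists_eq_mk_of_map_eq_mk hxy
  obtain ⟨c, e, rfl, rfl, rfl⟩ := Sym2.exists_eq_mk_of_map_eq_mk hzw
  rw [Sym2.ball] at hp hq
  exact ⟨a, b, c, e, rfl, rfl, hf _ _ _ hp.1 hq.1 hp.2 hxzy, hf _ _ _ hp.2 hq.2 hp.1 hywx⟩

theorem Sym2.eq_of_map_eq_map_of_injOn {α β : Type*} {f : α → β} {s : Set α}
    (hf : Set.InjOn f s) {p q : Sym2 α} (hp : ∀ a ∈ p, a ∈ s) (hq : ∀ a ∈ q, a ∈ s)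
    (h : p.map f = q.map f) : p = q := by
  induction p using Sym2.ind with | _ a b => ?_
  induction q using Sym2.ind with | _ c e => ?_
  rw [Sym2.ball] at hp hq
  rcases Sym2.eq_iff.mp h with ⟨hac, hbe⟩ | ⟨hae, hbc⟩
  · rw [hf hp.1 hq.1 hac, hf hp.2 hq.2 hbe]
  · rw [hf hp.1 hq.2 hae, hf hp.2 hq.1 hbc, Sym2.eq_swap]

section Polygon

variable {n : ℕ}

theorem theta_theta (a : ZMod (2 * n + 2)) : theta n (theta n a) = a := by
  unfold theta
  rw [add_assoc, ← Nat.cast_add, show n + 1 + (n + 1) = 2 * n + 2 by ring, ZMod.natCast_self,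
    add_zero]

theorem val_theta_sub (v a : ZMod (2 * n + 2)) :
    (theta n a - v).val =
      if (a - v).val ≤ n then (a - v).val + (n + 1) else (a - v).val - (n + 1) := by
  have hshift : theta n a - v = (a - v) + ((n + 1 : ℕ) : ZMod (2 * n + 2)) := by
    unfold theta
    ring
  have hval : ((n + 1 : ℕ) : ZMod (2 * n + 2)).val = n + 1 := ZMod.val_natCast_of_lt (by omega)
  have := (a - v).val_lt
  split_ifs
  · rw [hshift, ZMod.val_add_of_lt (by omega), hval]
  · rw [hshift, ZMod.val_add_of_le (by omega), hval]
    omega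

theorem val_theta_sub_self (v : ZMod (2 * n + 2)) : (theta n v - v).val = n + 1 := by
  simp [val_theta_sub]

theorem val_res (v a : ZMod (2 * n + 2)) : (res n v a).val = min (a - v).val (n + 2) := by
  unfold res
  split_ifs <;> rw [ZMod.val_natCast_of_lt (by omega)] <;> omega

def diameter (n : ℕ) (v : ZMod (2 * n + 2)) : Sym2 (ZMod (2 * n + 2)) := s(v, theta n v)

theorem cross_diameter {v a b : ZMod (2 * n + 2)} (ha₁ : 1 ≤ (a - v).val)
    (ha₂ : (a - v).val ≤ n) (hb : n + 2 ≤ (b - v).val) :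
    Cross (2 * n + 2) (diameter n v) s(a, b) := by
  have := (b - v).val_lt
  refine ⟨v, theta n v, a, b, rfl, rfl, ?_, ?_⟩ <;>
    simp only [strictBtw_iff v, val_theta_sub_self, sub_self, ZMod.val_zero] <;> omega

def OnLeft (n : ℕ) (v : ZMod (2 * n + 2)) (τ : Sym2 (ZMod (2 * n + 2))) : Prop :=
  ∀ a ∈ τ, (a - v).val ≤ n + 1

instance (v : ZMod (2 * n + 2)) : DecidablePred (OnLeft n v) :=
  fun τ => inferInstanceAs (Decidable (∀ a ∈ τ, (a - v).val ≤ n + 1))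

theorem onLeft_mk {v a b : ZMod (2 * n + 2)} :
    OnLeft n v s(a, b) ↔ (a - v).val ≤ n + 1 ∧ (b - v).val ≤ n + 1 :=
  Sym2.ball

variable {T : Finset (Sym2 (ZMod (2 * n + 2)))} {v : ZMod (2 * n + 2)}

theorem val_sub_le_of_mem_of_noncrossing
    (hnc : ∀ p ∈ T, ∀ q ∈ T, p ≠ q → ¬Cross (2 * n + 2) p q) (hv : diameter n v ∈ T)
    {τ : Sym2 (ZMod (2 * n + 2))} (hτ : τ ∈ T) {a b : ZMod (2 * n + 2)}
    (ha : a ∈ τ) (hb : b ∈ τ) (ha₁ : 1 ≤ (a - v).val) (ha₂ : (a - v).val ≤ n) :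
    (b - v).val ≤ n + 1 := by
  by_contra! hb'
  have hab : a ≠ b := by
    rintro rfl
    omega
  obtain rfl := (Sym2.mem_and_mem_iff hab).mp ⟨ha, hb⟩
  refine hnc _ hv _ hτ ?_ (cross_diameter ha₁ ha₂ hb')
  intro hd
  rcases Sym2.mem_iff.mp (hd ▸ Sym2.mem_mk_left a b : a ∈ diameter n v) with rfl | rfl
  · simp at ha₁
  · rw [val_theta_sub_self] at ha₂
    omega

theorem onLeft_or_onLeft_map_theta (hnc : ∀ p ∈ T, ∀ q ∈ T, p ≠ q → ¬Cross (2 * n + 2) p q)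
    (hv : diameter n v ∈ T) {τ : Sym2 (ZMod (2 * n + 2))} (hτ : τ ∈ T) :
    OnLeft n v τ ∨ OnLeft n v (τ.map (theta n)) := by
  induction τ using Sym2.ind with | _ a b => ?_
  have hab := val_sub_le_of_mem_of_noncrossing hnc hv hτ (Sym2.mem_mk_left a b)
    (Sym2.mem_mk_right a b)
  have hba := val_sub_le_of_mem_of_noncrossing hnc hv hτ (Sym2.mem_mk_right a b)
    (Sym2.mem_mk_left a b)
  have := (a - v).val_lt
  have := (b - v).val_lt
  rw [Sym2.map_mk, onLeft_mk, onLeft_mk, val_theta_sub, val_theta_sub]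
  split_ifs <;> omega

theorem eq_diameter_of_onLeft {τ : Sym2 (ZMod (2 * n + 2))} (hτ : IsDiagonal (2 * n + 2) τ)
    (h₁ : OnLeft n v τ) (h₂ : OnLeft n v (τ.map (theta n))) : τ = diameter n v := by
  obtain ⟨a, b, rfl, hab, -⟩ := hτ
  rw [onLeft_mk] at h₁
  rw [Sym2.map_mk, onLeft_mk, val_theta_sub, val_theta_sub] at h₂
  rw [ne_eq, eq_iff_val_sub_eq v] at hab
  have hvθ : v ≠ theta n v := by
    rw [ne_eq, eq_iff_val_sub_eq v, sub_self, val_theta_sub_self, ZMod.val_zero]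
    omega
  rw [diameter, ← Sym2.mem_and_mem_iff hvθ, Sym2.mem_iff, Sym2.mem_iff,
    eq_iff_val_sub_eq v v a, eq_iff_val_sub_eq v v b, eq_iff_val_sub_eq v (theta n v) a,
    eq_iff_val_sub_eq v (theta n v) b, sub_self, val_theta_sub_self, ZMod.val_zero]
  split_ifs at h₂ <;> omega

theorem isDiagonal_map_res_iff (hn : 1 ≤ n) (hdiag : ∀ p ∈ T, IsDiagonal (2 * n + 2) p)
    (hnc : ∀ p ∈ T, ∀ q ∈ T, p ≠ q → ¬Cross (2 * n + 2) p q) (hv : diameter n v ∈ T)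
    {τ : Sym2 (ZMod (2 * n + 2))} (hτ : τ ∈ T) :
    IsDiagonal (n + 3) (τ.map (res n v)) ↔ OnLeft n v τ := by
  have hτd := hdiag τ hτ
  induction τ using Sym2.ind with | _ a b => ?_
  have hab := val_sub_le_of_mem_of_noncrossing hnc hv hτ (Sym2.mem_mk_left a b)
    (Sym2.mem_mk_right a b)
  have hba := val_sub_le_of_mem_of_noncrossing hnc hv hτ (Sym2.mem_mk_right a b)
    (Sym2.mem_mk_left a b)
  have := (a - v).val_lt
  have := (b - v).val_lt
  rw [isDiagonal_mk_iff (by omega) v] at hτd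
  rw [Sym2.map_mk, isDiagonal_mk_iff (by omega) 0, sub_zero, sub_zero, val_res, val_res,
    onLeft_mk]
  constructor <;> intro <;> omega

theorem injOn_res : Set.InjOn (res n v) {a | (a - v).val ≤ n + 1} := by
  intro a ha b hb h
  have hval := congrArg ZMod.val h
  rw [val_res, val_res] at hval
  rw [Set.mem_ofPred_eq] at ha hb
  rw [eq_iff_val_sub_eq v]
  omega

theorem strictBtw_of_strictBtw_res {a x b : ZMod (2 * n + 2)} (ha : (a - v).val ≤ n + 1)
    (hx : (x - v).val ≤ n + 1) (hb : (b - v).val ≤ n + 1)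
    (h : StrictBtw (n + 3) (res n v a) (res n v x) (res n v b)) :
    StrictBtw (2 * n + 2) a x b := by
  rw [strictBtw_iff 0] at h
  rw [strictBtw_iff v]
  simp only [sub_zero, val_res] at h
  omega

theorem map_theta_diameter : (diameter n v).map (theta n) = diameter n v := by
  rw [diameter, Sym2.map_mk, theta_theta, Sym2.eq_swap]

theorem card_filter_onLeft (hdiag : ∀ p ∈ T, IsDiagonal (2 * n + 2) p)
    (hnc : ∀ p ∈ T, ∀ q ∈ T, p ≠ q → ¬Cross (2 * n + 2) p q) (hcard : T.card = 2 * n - 1)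
    (hinv : T.image (Sym2.map (theta n)) = T) (hv : diameter n v ∈ T) :
    (T.filter (OnLeft n v)).card = n := by
  have hθT : ∀ τ ∈ T, τ.map (theta n) ∈ T := fun τ hτ => hinv ▸ Finset.mem_image_of_mem _ hτ
  have hθθ : Function.Involutive (Sym2.map (theta n)) := fun τ => by
    rw [Sym2.map_map, show theta n ∘ theta n = id from funext theta_theta, Sym2.map_id, id]
  have hunion :
      T.filter (OnLeft n v) ∪ (T.filter (OnLeft n v)).image (Sym2.map (theta n)) = T := by
    ext τ
    simp only [Finset.mem_union, Finset.mem_filter, Finset.mem_image]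
    constructor
    · rintro (⟨hτ, -⟩ | ⟨σ, ⟨hσ, -⟩, rfl⟩)
      exacts [hτ, hθT σ hσ]
    · intro hτ
      rcases onLeft_or_onLeft_map_theta hnc hv hτ with h | h
      · exact Or.inl ⟨hτ, h⟩
      · exact Or.inr ⟨_, ⟨hθT τ hτ, h⟩, hθθ τ⟩
  have hinter : T.filter (OnLeft n v) ∩ (T.filter (OnLeft n v)).image (Sym2.map (theta n)) =
      {diameter n v} := by
    ext τ
    simp only [Finset.mem_inter, Finset.mem_filter, Finset.mem_image, Finset.mem_singleton]
    constructor
    · rintro ⟨⟨hτ, hL⟩, σ, ⟨-, hσL⟩, rfl⟩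
      exact eq_diameter_of_onLeft (hdiag _ hτ) hL (by rwa [hθθ])
    · rintro rfl
      have hdL : OnLeft n v (diameter n v) := onLeft_mk.mpr (by simp [val_theta_sub_self])
      exact ⟨⟨hv, hdL⟩, diameter n v, ⟨hv, hdL⟩, map_theta_diameter⟩
  have hcount := Finset.card_union_add_card_inter (T.filter (OnLeft n v))
    ((T.filter (OnLeft n v)).image (Sym2.map (theta n)))
  rw [hunion, hinter, Finset.card_image_of_injective _ hθθ.injective,
    Finset.card_singleton] at hcount
  have := Finset.card_pos.mpr ⟨_, hv⟩
  omega

end Polygon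

/-- The restriction of a `θ`-invariant triangulation `T` of the `(2n+2)`-gon with diameter
`{v, v+n+1}`: the images of the diagonals of `T` which are genuine diagonals of the
`(n+3)`-gon form a set of `n` pairwise non-crossing diagonals, i.e. a triangulation. -/
theorem stmt15 (n : ℕ) (hn : 1 ≤ n) (T : Finset (Sym2 (ZMod (2 * n + 2))))
    (hdiag : ∀ p ∈ T, IsDiagonal (2 * n + 2) p)
    (hnc : ∀ p ∈ T, ∀ q ∈ T, p ≠ q → ¬ Cross (2 * n + 2) p q)
    (hcard : T.card = 2 * n - 1)
    (hinv : T.image (Sym2.map (theta n)) = T)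
    (v : ZMod (2 * n + 2))
    (hv : s(v, v + ((n + 1 : ℕ) : ZMod (2 * n + 2))) ∈ T) :
    (∀ p ∈ {q : Sym2 (ZMod (n + 3)) |
        (∃ τ ∈ T, q = Sym2.map (res n v) τ) ∧ IsDiagonal (n + 3) q},
      ∀ q ∈ {q : Sym2 (ZMod (n + 3)) |
        (∃ τ ∈ T, q = Sym2.map (res n v) τ) ∧ IsDiagonal (n + 3) q},
      p ≠ q → ¬ Cross (n + 3) p q) ∧
    {q : Sym2 (ZMod (n + 3)) |
      (∃ τ ∈ T, q = Sym2.map (res n v) τ) ∧ IsDiagonal (n + 3) q}.ncard = n := by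
  have hd : diameter n v ∈ T := hv
  have himage : {q : Sym2 (ZMod (n + 3)) |
      (∃ τ ∈ T, q = Sym2.map (res n v) τ) ∧ IsDiagonal (n + 3) q} =
      ((T.filter (OnLeft n v)).image (Sym2.map (res n v)) : Set _) := by
    ext q
    simp only [Set.mem_ofPred_eq, Finset.coe_image, Finset.coe_filter, Set.mem_image]
    constructor
    · rintro ⟨⟨τ, hτ, rfl⟩, hq⟩
      exact ⟨τ, ⟨hτ, (isDiagonal_map_res_iff hn hdiag hnc hd hτ).mp hq⟩, rfl⟩
    · rintro ⟨τ, ⟨hτ, hL⟩, rfl⟩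
      exact ⟨⟨τ, hτ, rfl⟩, (isDiagonal_map_res_iff hn hdiag hnc hd hτ).mpr hL⟩
  have hinj : Set.InjOn (Sym2.map (res n v)) (T.filter (OnLeft n v)) := fun τ hτ σ hσ =>
    Sym2.eq_of_map_eq_map_of_injOn injOn_res (Finset.mem_filter.mp hτ).2
      (Finset.mem_filter.mp hσ).2
  rw [himage, Set.ncard_coe_finset, Finset.card_image_of_injOn hinj,
    card_filter_onLeft hdiag hnc hcard hinv hd]
  refine ⟨?_, rfl⟩
  simp only [Finset.coe_image, Finset.coe_filter, Set.forall_mem_image, Set.mem_ofPred_eq]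
  intro τ hτ σ hσ hne hcross
  exact hnc τ hτ.1 σ hσ.1 (fun h => hne (h ▸ rfl))
    (Cross.of_map _ (fun _ _ _ => strictBtw_of_strictBtw_res) hτ.2 hσ.2 hcross)
end
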